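/- arXiv:2307.01661 — 3 statements merged into one kernel-verified Lean document; each statement's English description precedes it below -/
import Mathlib

section
/- Let G be a finite group. Then the power graph P(G) is a line graph of some graph if and only if G is a cyclic group of prime power order (i.e., G ≅ Z_{p^α} for some prime p and α ≥ 0). -/
open Subgroup

/-- A graph is a line graph if it is isomorphic to the line graph of some graph. -/
def IsLineGraph {V : Type} (Γ : SimpleGraph V) : Prop :=
  ∃ (W : Type) (H : SimpleGraph W), Nonempty (Γ ≃g H.lineGraph)

/-- The power graph of a group: distinct `x`, `y` are adjacent iff one is a power
of the other. -/
def powerGraph (G : Type) [Group G] : SimpleGraph G where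
  Adj x y := x ≠ y ∧ (x ∈ zpowers y ∨ y ∈ zpowers x)
  symm := by constructor; rintro x y ⟨hne, h⟩; exact ⟨hne.symm, h.symm⟩
  loopless := by constructor; rintro x ⟨hne, _⟩; exact hne rfl

/-- The enhanced power graph of a group: distinct `x`, `y` are adjacent iff both are
powers of a common element. -/
def enhancedPowerGraph (G : Type) [Group G] : SimpleGraph G where
  Adj x y := x ≠ y ∧ ∃ z : G, x ∈ zpowers z ∧ y ∈ zpowers z
  symm := by constructor; rintro x y ⟨hne, z, hx, hy⟩; exact ⟨hne.symm, z, hy, hx⟩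
  loopless := by constructor; rintro x ⟨hne, _⟩; exact hne rfl

/-- A vertex is dominating if it is adjacent to all other vertices. -/
def IsDominatingVertex {V : Type} (Γ : SimpleGraph V) (v : V) : Prop :=
  ∀ w : V, w ≠ v → Γ.Adj v w

/-- The graph induced on the non-dominating vertices. -/
def properGraph {V : Type} (Γ : SimpleGraph V) :
    SimpleGraph {v : V | ¬ IsDominatingVertex Γ v} :=
  Γ.induce {v : V | ¬ IsDominatingVertex Γ v}

/-- The proper power graph `P**(G)`. -/
abbrev properPowerGraph (G : Type) [Group G] := properGraph (powerGraph G)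

/-- The proper enhanced power graph `P_E**(G)`. -/
abbrev properEnhancedPowerGraph (G : Type) [Group G] := properGraph (enhancedPowerGraph G)

/-- A maximal cyclic subgroup: cyclic and not properly contained in a cyclic subgroup. -/
def IsMaxCyclic {G : Type} [Group G] (M : Subgroup G) : Prop :=
  IsCyclic M ∧ ∀ N : Subgroup G, IsCyclic N → M ≤ N → N = M

/-- `T(G)`: the intersection of all maximal cyclic subgroups of `G`. -/
def cyclicCore (G : Type) [Group G] : Subgroup G :=
  ⨅ (M : Subgroup G) (_ : IsMaxCyclic M), M

/-- `G` is an elementary abelian 2-group `Z₂ × ⋯ × Z₂`. -/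
def IsElemAbelianTwo (G : Type) [Group G] : Prop :=
  ∃ k : ℕ, 1 ≤ k ∧ Nonempty (G ≃* (Fin k → Multiplicative (ZMod 2)))

/-!
Line graphs contain neither an induced claw `K₁,₃` nor an induced `K₅` minus an edge: an edge
has only two endpoints, and the edges meeting two disjoint edges `x`, `y` are among the four
pairs `x × y`, no three of which pairwise meet.

Let `x`, `y` be elements of `G` neither of which is a power of the other, and put `g = x * y`.
If `x ∉ ⟨g⟩`, then `y ∉ ⟨g⟩`, `g ∉ ⟨x⟩` and `g ∉ ⟨y⟩`, so `x`, `y`, `g` are a claw around `1`.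
If `x ∈ ⟨g⟩`, then also `y ∈ ⟨g⟩`, and `1`, `g`, `g⁻¹` are a triangle adjacent to both `x` and `y`.
So `P(G)` is complete, i.e. the cyclic subgroups of `G` form a chain. For finite `G` this forces
`G` to be generated by an element of maximal order, and `|G|` to be a prime power, since
elements of two different prime orders are incomparable. Conversely, in a cyclic `p`-group
`x ∈ ⟨y⟩` as soon as `ord x ∣ ord y`, and a complete graph is the line graph of a star.
-/

theorem Sym2.eq_or_eq_of_mem {α : Type*} {z : Sym2 α} {a b c : α} (ha : a ∈ z) (hb : b ∈ z)
    (hc : c ∈ z) (hab : a ≠ b) : c = a ∨ c = b := by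
  rwa [(Sym2.mem_and_mem_iff hab).1 ⟨ha, hb⟩, Sym2.mem_iff] at hc

namespace SimpleGraph

variable {W : Type*} {H : SimpleGraph W}

theorem lineGraph_compl_adj_iff {e₁ e₂ : H.edgeSet} :
    H.lineGraphᶜ.Adj e₁ e₂ ↔ e₁ ≠ e₂ ∧ ∀ v ∈ (e₁ : Sym2 W), v ∉ (e₂ : Sym2 W) := by
  simp +contextual [lineGraph_adj_iff_exists]

theorem lineGraph_false_of_induced_claw {c a₁ a₂ a₃ : H.edgeSet}
    (h₁ : H.lineGraph.Adj c a₁) (h₂ : H.lineGraph.Adj c a₂) (h₃ : H.lineGraph.Adj c a₃)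
    (h₁₂ : H.lineGraphᶜ.Adj a₁ a₂) (h₁₃ : H.lineGraphᶜ.Adj a₁ a₃)
    (h₂₃ : H.lineGraphᶜ.Adj a₂ a₃) : False := by
  obtain ⟨-, v₁, hc₁, hv₁⟩ := lineGraph_adj_iff_exists.1 h₁
  obtain ⟨-, v₂, hc₂, hv₂⟩ := lineGraph_adj_iff_exists.1 h₂
  obtain ⟨-, v₃, hc₃, hv₃⟩ := lineGraph_adj_iff_exists.1 h₃
  have h₁₂ := (lineGraph_compl_adj_iff.1 h₁₂).2
  have h₁₃ := (lineGraph_compl_adj_iff.1 h₁₃).2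
  have h₂₃ := (lineGraph_compl_adj_iff.1 h₂₃).2
  rcases Sym2.eq_or_eq_of_mem hc₁ hc₂ hc₃ (by rintro rfl; exact h₁₂ v₁ hv₁ hv₂) with rfl | rfl
  · exact h₁₃ v₃ hv₁ hv₃
  · exact h₂₃ v₃ hv₂ hv₃

theorem exists_eq_mk_of_lineGraph_adj {x y t : H.edgeSet} (hxy : H.lineGraphᶜ.Adj x y)
    (htx : H.lineGraph.Adj t x) (hty : H.lineGraph.Adj t y) :
    ∃ a ∈ (x : Sym2 W), ∃ b ∈ (y : Sym2 W), (t : Sym2 W) = s(a, b) := by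
  obtain ⟨-, a, hat, hax⟩ := lineGraph_adj_iff_exists.1 htx
  obtain ⟨-, b, hbt, hby⟩ := lineGraph_adj_iff_exists.1 hty
  refine ⟨a, hax, b, hby, (Sym2.mem_and_mem_iff ?_).1 ⟨hat, hbt⟩⟩
  rintro rfl
  exact (lineGraph_compl_adj_iff.1 hxy).2 a hax hby

/-- Adjacent edges joining two disjoint edges `x` and `y` share exactly one endpoint. -/
theorem eq_iff_ne_of_lineGraph_adj {x y s t : H.edgeSet} {a b a' b' : W}
    (hxy : H.lineGraphᶜ.Adj x y) (hst : H.lineGraph.Adj s t) (hs : (s : Sym2 W) = s(a, b))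
    (ht : (t : Sym2 W) = s(a', b')) (ha : a ∈ (x : Sym2 W)) (ha' : a' ∈ (x : Sym2 W))
    (hb : b ∈ (y : Sym2 W)) (hb' : b' ∈ (y : Sym2 W)) : a = a' ↔ b ≠ b' := by
  have hdisj := (lineGraph_compl_adj_iff.1 hxy).2
  obtain ⟨hne, c, hcs, hct⟩ := lineGraph_adj_iff_exists.1 hst
  rw [hs, Sym2.mem_iff] at hcs
  rw [ht, Sym2.mem_iff] at hct
  have : ¬ (a = a' ∧ b = b') := by
    rintro ⟨rfl, rfl⟩
    exact hne (Subtype.ext (hs.trans ht.symm))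
  grind

theorem lineGraph_false_of_induced_k5_minus_edge {x y u v w : H.edgeSet}
    (hxy : H.lineGraphᶜ.Adj x y)
    (hux : H.lineGraph.Adj u x) (huy : H.lineGraph.Adj u y)
    (hvx : H.lineGraph.Adj v x) (hvy : H.lineGraph.Adj v y)
    (hwx : H.lineGraph.Adj w x) (hwy : H.lineGraph.Adj w y)
    (huv : H.lineGraph.Adj u v) (huw : H.lineGraph.Adj u w) (hvw : H.lineGraph.Adj v w) :
    False := by
  obtain ⟨a₁, ha₁, b₁, hb₁, hu⟩ := exists_eq_mk_of_lineGraph_adj hxy hux huy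
  obtain ⟨a₂, ha₂, b₂, hb₂, hv⟩ := exists_eq_mk_of_lineGraph_adj hxy hvx hvy
  obtain ⟨a₃, ha₃, b₃, hb₃, hw⟩ := exists_eq_mk_of_lineGraph_adj hxy hwx hwy
  have h₁₂ := eq_iff_ne_of_lineGraph_adj hxy huv hu hv ha₁ ha₂ hb₁ hb₂
  have h₁₃ := eq_iff_ne_of_lineGraph_adj hxy huw hu hw ha₁ ha₃ hb₁ hb₃
  have h₂₃ := eq_iff_ne_of_lineGraph_adj hxy hvw hv hw ha₂ ha₃ hb₂ hb₃
  have hx := Sym2.eq_or_eq_of_mem ha₁ ha₂ ha₃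
  have hy := Sym2.eq_or_eq_of_mem hb₁ hb₂ hb₃
  -- three distinct cells of the `2 × 2` grid `x × y`, pairwise in a common row or column
  grind

end SimpleGraph

open SimpleGraph

namespace IsLineGraph

variable {V : Type} {Γ : SimpleGraph V}

theorem false_of_induced_claw (hΓ : IsLineGraph Γ) {c a₁ a₂ a₃ : V}
    (h₁ : Γ.Adj c a₁) (h₂ : Γ.Adj c a₂) (h₃ : Γ.Adj c a₃)
    (h₁₂ : Γᶜ.Adj a₁ a₂) (h₁₃ : Γᶜ.Adj a₁ a₃) (h₂₃ : Γᶜ.Adj a₂ a₃) : False := by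
  obtain ⟨W, H, ⟨f⟩⟩ := hΓ
  let f' := Embedding.complEquiv f.toEmbedding
  exact lineGraph_false_of_induced_claw (f.map_adj_iff.2 h₁) (f.map_adj_iff.2 h₂)
    (f.map_adj_iff.2 h₃) (f'.map_adj_iff.2 h₁₂) (f'.map_adj_iff.2 h₁₃) (f'.map_adj_iff.2 h₂₃)

theorem false_of_induced_k5_minus_edge (hΓ : IsLineGraph Γ) {x y u v w : V}
    (hxy : Γᶜ.Adj x y) (hux : Γ.Adj u x) (huy : Γ.Adj u y) (hvx : Γ.Adj v x)
    (hvy : Γ.Adj v y) (hwx : Γ.Adj w x) (hwy : Γ.Adj w y)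
    (huv : Γ.Adj u v) (huw : Γ.Adj u w) (hvw : Γ.Adj v w) : False := by
  obtain ⟨W, H, ⟨f⟩⟩ := hΓ
  let f' := Embedding.complEquiv f.toEmbedding
  exact lineGraph_false_of_induced_k5_minus_edge (f'.map_adj_iff.2 hxy)
    (f.map_adj_iff.2 hux) (f.map_adj_iff.2 huy) (f.map_adj_iff.2 hvx) (f.map_adj_iff.2 hvy)
    (f.map_adj_iff.2 hwx) (f.map_adj_iff.2 hwy) (f.map_adj_iff.2 huv) (f.map_adj_iff.2 huw)
    (f.map_adj_iff.2 hvw)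

end IsLineGraph

theorem isLineGraph_top (V : Type) : IsLineGraph (⊤ : SimpleGraph V) := by
  let φ : V → (starGraph (none : Option V)).edgeSet := fun v => ⟨s(none, some v), by simp⟩
  have hφ : Function.Bijective φ := by
    refine ⟨fun v w h => by simpa [φ] using h, ?_⟩
    rintro ⟨e, he⟩
    induction e using Sym2.ind with
    | _ a b =>
      simp only [mem_edgeSet, starGraph_adj] at he
      obtain ⟨hab, rfl | rfl⟩ := he
      · obtain ⟨v, rfl⟩ := Option.ne_none_iff_exists'.1 hab.symm
        exact ⟨v, rfl⟩
      · obtain ⟨v, rfl⟩ := Option.ne_none_iff_exists'.1 hab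
        exact ⟨v, Subtype.ext Sym2.eq_swap⟩
  refine ⟨Option V, starGraph none, ⟨Equiv.ofBijective φ hφ, ?_⟩⟩
  intro v w
  simp [φ, lineGraph_adj_iff_exists]

theorem Nat.exists_eq_prime_pow_of_prime_dvd_eq {n : ℕ} (hn : n ≠ 0)
    (h : ∀ p q : ℕ, p.Prime → q.Prime → p ∣ n → q ∣ n → p = q) :
    ∃ p α : ℕ, p.Prime ∧ n = p ^ α := by
  rcases eq_or_ne n 1 with rfl | hn1
  · exact ⟨2, 0, Nat.prime_two, rfl⟩
  · have hp := Nat.minFac_prime hn1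
    exact ⟨_, _, hp, Nat.eq_prime_pow_of_unique_prime_dvd hn
      fun hd hdn => h _ _ hd hp hdn (Nat.minFac_dvd n)⟩

section Group

variable {G : Type*} [Group G]

theorem eq_one_or_eq_of_mem_zpowers_of_inv_eq {g x : G} (hg : g⁻¹ = g) (hx : x ∈ zpowers g) :
    x = 1 ∨ x = g := by
  obtain ⟨k, rfl⟩ := mem_zpowers_iff.1 hx
  have hg2 : g ^ (2 : ℤ) = 1 := by rw [zpow_two, ← mul_inv_cancel g, hg]
  obtain ⟨m, rfl | rfl⟩ := Int.even_or_odd' k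
  · exact .inl (by rw [zpow_mul, hg2, one_zpow])
  · exact .inr (by rw [zpow_add, zpow_mul, hg2, one_zpow, one_mul, zpow_one])

theorem isCyclic_of_forall_mem_zpowers_or [Finite G]
    (h : ∀ x y : G, x ∈ zpowers y ∨ y ∈ zpowers x) : IsCyclic G := by
  obtain ⟨g, hg⟩ := Finite.exists_max (orderOf : G → ℕ)
  refine isCyclic_iff_exists_zpowers_eq_top.2 ⟨g, eq_top_iff.2 fun x _ => (h x g).elim id ?_⟩
  intro hgx
  rw [eq_of_le_of_card_ge (zpowers_le.2 hgx) (by simpa only [Nat.card_zpowers] using hg x)]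
  exact mem_zpowers x

theorem eq_of_prime_dvd_card_of_forall_mem_zpowers_or [Finite G]
    (h : ∀ x y : G, x ∈ zpowers y ∨ y ∈ zpowers x) {p q : ℕ} (hp : p.Prime) (hq : q.Prime)
    (hpG : p ∣ Nat.card G) (hqG : q ∣ Nat.card G) : p = q := by
  have := Fact.mk hp
  have := Fact.mk hq
  obtain ⟨x, rfl⟩ := exists_prime_orderOf_dvd_card' p hpG
  obtain ⟨y, rfl⟩ := exists_prime_orderOf_dvd_card' _ hqG
  rcases h x y with hxy | hyx
  · exact (Nat.prime_dvd_prime_iff_eq hp hq).1 (orderOf_dvd_of_mem_zpowers hxy)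
  · exact ((Nat.prime_dvd_prime_iff_eq hq hp).1 (orderOf_dvd_of_mem_zpowers hyx)).symm

theorem IsCyclic.mem_zpowers_of_orderOf_dvd [Finite G] [IsCyclic G] {x y : G}
    (h : orderOf x ∣ orderOf y) : x ∈ zpowers y := by
  classical
  have := Fintype.ofFinite G
  have hsub : (zpowers y : Set G).toFinset ⊆ ({z | z ^ orderOf y = 1} : Finset G) := by
    intro z hz
    simpa [orderOf_dvd_iff_pow_eq_one] using orderOf_dvd_of_mem_zpowers (Set.mem_toFinset.1 hz)
  have heq := Finset.eq_of_subset_of_card_le hsub (by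
    rw [Set.toFinset_card, ← Nat.card_eq_fintype_card, SetLike.coe_sort_coe, Nat.card_zpowers]
    exact IsCyclic.card_pow_eq_one_le (orderOf_pos y))
  have hx : x ∈ ({z | z ^ orderOf y = 1} : Finset G) := by
    simpa [orderOf_dvd_iff_pow_eq_one] using h
  simpa [← heq] using hx

theorem IsCyclic.mem_zpowers_or_of_card_eq_prime_pow [Finite G] [IsCyclic G] {p α : ℕ}
    (hp : p.Prime) (hG : Nat.card G = p ^ α) (x y : G) : x ∈ zpowers y ∨ y ∈ zpowers x := by
  obtain ⟨i, -, hi⟩ := (Nat.dvd_prime_pow hp).1 (hG ▸ orderOf_dvd_natCard x)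
  obtain ⟨j, -, hj⟩ := (Nat.dvd_prime_pow hp).1 (hG ▸ orderOf_dvd_natCard y)
  rcases le_total i j with hij | hji
  · exact .inl (mem_zpowers_of_orderOf_dvd (hi ▸ hj ▸ pow_dvd_pow p hij))
  · exact .inr (mem_zpowers_of_orderOf_dvd (hi ▸ hj ▸ pow_dvd_pow p hji))

theorem forall_mem_zpowers_or_iff_exists_mulEquiv_zmod [Finite G] :
    (∀ x y : G, x ∈ zpowers y ∨ y ∈ zpowers x) ↔
      ∃ p α : ℕ, p.Prime ∧ Nonempty (G ≃* Multiplicative (ZMod (p ^ α))) := by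
  constructor
  · intro h
    have := isCyclic_of_forall_mem_zpowers_or h
    obtain ⟨p, α, hp, hG⟩ := Nat.exists_eq_prime_pow_of_prime_dvd_eq Nat.card_pos.ne'
      fun p q => eq_of_prime_dvd_card_of_forall_mem_zpowers_or h
    exact ⟨p, α, hp, ⟨hG ▸ (zmodCyclicMulEquiv this).symm⟩⟩
  · rintro ⟨p, α, hp, ⟨e⟩⟩
    have : NeZero (p ^ α) := ⟨pow_ne_zero α hp.ne_zero⟩
    have := e.isCyclic.2 inferInstance
    exact IsCyclic.mem_zpowers_or_of_card_eq_prime_pow hp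
      ((Nat.card_congr e.toEquiv).trans (Nat.card_zmod _))

end Group

section PowerGraph

variable {G : Type} [Group G]

theorem powerGraph_eq_top_iff : powerGraph G = ⊤ ↔ ∀ x y : G, x ∈ zpowers y ∨ y ∈ zpowers x := by
  refine ⟨fun h x y => ?_, fun h => ?_⟩
  · rcases eq_or_ne x y with rfl | hxy
    · exact .inl (mem_zpowers x)
    · exact ((h ▸ hxy : (powerGraph G).Adj x y)).2
  · ext x y
    exact ⟨fun hxy => hxy.1, fun hxy => ⟨hxy, h x y⟩⟩

theorem powerGraph_compl_adj {x y : G} :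
    (powerGraph G)ᶜ.Adj x y ↔ x ∉ zpowers y ∧ y ∉ zpowers x := by
  simp only [compl_adj, powerGraph, not_and, not_or]
  grind [mem_zpowers]

theorem mem_zpowers_or_of_isLineGraph (hP : IsLineGraph (powerGraph G)) (x y : G) :
    x ∈ zpowers y ∨ y ∈ zpowers x := by
  by_contra! ⟨hxy, hyx⟩
  have adj_one : ∀ {z : G}, z ≠ 1 → (powerGraph G).Adj 1 z :=
    fun hz => ⟨hz.symm, .inl (one_mem _)⟩
  have hx1 : x ≠ 1 := by rintro rfl; exact hxy (one_mem _)
  have hy1 : y ≠ 1 := by rintro rfl; exact hyx (one_mem _)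
  have hcompl : (powerGraph G)ᶜ.Adj x y := powerGraph_compl_adj.2 ⟨hxy, hyx⟩
  set g := x * y
  by_cases hxg : x ∈ zpowers g
  · have hyg : y ∈ zpowers g := by simpa [g] using mul_mem (inv_mem hxg) (mem_zpowers g)
    have adj_gen : ∀ {z : G}, zpowers z = zpowers g →
        (powerGraph G).Adj z x ∧ (powerGraph G).Adj z y := by
      intro z hz
      refine ⟨⟨?_, .inr (hz ▸ hxg)⟩, ⟨?_, .inr (hz ▸ hyg)⟩⟩
      · rintro rfl; exact hyx (hz ▸ hyg)
      · rintro rfl; exact hxy (hz ▸ hxg)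
    have hg1 : g ≠ 1 := by rintro hg; exact hx1 (by simpa [hg] using hxg)
    have hgg : g ≠ g⁻¹ := fun h =>
      (eq_one_or_eq_of_mem_zpowers_of_inv_eq h.symm hxg).elim hx1 fun hxg' => hyx (hxg' ▸ hyg)
    exact hP.false_of_induced_k5_minus_edge hcompl (adj_one hx1) (adj_one hy1)
      (adj_gen rfl).1 (adj_gen rfl).2 (adj_gen zpowers_inv).1 (adj_gen zpowers_inv).2
      (adj_one hg1) (adj_one (inv_ne_one.2 hg1)) ⟨hgg, .inr (inv_mem (mem_zpowers g))⟩
  · have hyg : y ∉ zpowers g := fun h =>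
      hxg (by simpa [g] using mul_mem (mem_zpowers g) (inv_mem h))
    have hgx : g ∉ zpowers x := fun h =>
      hyx (by simpa [g] using mul_mem (inv_mem (mem_zpowers x)) h)
    have hgy : g ∉ zpowers y := fun h =>
      hxy (by simpa [g] using mul_mem h (inv_mem (mem_zpowers y)))
    have hg1 : g ≠ 1 := by rintro hg; exact hgx (hg ▸ one_mem _)
    exact hP.false_of_induced_claw (adj_one hx1) (adj_one hy1) (adj_one hg1) hcompl
      (powerGraph_compl_adj.2 ⟨hxg, hgx⟩) (powerGraph_compl_adj.2 ⟨hyg, hgy⟩)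

end PowerGraph

/-- `P(G)` is a line graph iff `G` is cyclic of prime power order. -/
theorem powerGraph_isLineGraph_iff (G : Type) [Group G] [Fintype G] :
    IsLineGraph (powerGraph G) ↔
      ∃ p α : ℕ, p.Prime ∧ Nonempty (G ≃* Multiplicative (ZMod (p ^ α))) := by
  rw [← forall_mem_zpowers_or_iff_exists_mulEquiv_zmod]
  refine ⟨mem_zpowers_or_of_isLineGraph, fun h => ?_⟩
  rw [powerGraph_eq_top_iff.2 h]
  exact isLineGraph_top G
end

section
/- Let G be a finite non-cyclic group and let T(G) denote the intersection of all maximal cyclic subgroups of G. Then the proper enhanced power graph P_E**(G) is a line graph of some graph if and only if both of the following hold: (i) for any two distinct maximal cyclic subgroups M_i, M_j of G, |(M_i ∩ M_j) \ T(G)| ≤ 1; (ii) for any three pairwise distinct maximal cyclic subgroups M_i, M_j, M_k of G, (M_i ∩ M_j ∩ M_k) \ T(G) = ∅. -/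
open Subgroup

/-! Outside `T(G)` two elements are adjacent in `P_E(G)` exactly when they lie in a common
maximal cyclic subgroup, and the elements of `T(G)` are exactly the dominating vertices; so the
sets `M \ T(G)`, `M` maximal cyclic, are cliques covering `P_E**(G)`.

If (i) and (ii) hold, every vertex lies in one or two of these cliques and two vertices share at
most one of them, so sending a vertex to the edge between its two cliques (or to a pendant edge at
its only clique) exhibits `P_E**(G)` as a line graph, as in Krausz's theorem.

Conversely, line graphs are claw-free: an element of `Mᵢ ∩ Mⱼ ∩ Mₖ \ T(G)` together with
generators of the three subgroups would form a claw, which gives (ii). For (i), two elements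
`x ≠ y` of `Mᵢ ∩ Mⱼ \ T(G)` and generators `mᵢ`, `mⱼ` form a diamond, and in a line graph one of
its triangles, say `x y mⱼ`, has no common neighbour. But `mⱼ⁻¹` is one, unless `mⱼ⁻¹ = mⱼ`; then
`⟨mⱼ⟩ = {1, mⱼ}` cannot contain `x`. -/

namespace SimpleGraph

variable {W : Type} {H : SimpleGraph W}

theorem lineGraph_adj_of_mem {a b : H.edgeSet} {v : W} (hab : a ≠ b) (ha : v ∈ (a : Sym2 W))
    (hb : v ∈ (b : Sym2 W)) : H.lineGraph.Adj a b :=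
  lineGraph_adj_iff_exists.mpr ⟨hab, v, ha, hb⟩

theorem ne_of_coe_edgeSet_eq_mk {e : H.edgeSet} {p q : W} (he : (e : Sym2 W) = s(p, q)) :
    p ≠ q :=
  (H.mem_edgeSet.mp (he ▸ e.2)).ne

theorem lineGraph_not_adj_of_triangle {x y c f : H.edgeSet} {p q r : W}
    (hx : (x : Sym2 W) = s(p, q)) (hy : (y : Sym2 W) = s(p, r)) (hc : (c : Sym2 W) = s(q, r))
    (hfx : H.lineGraph.Adj f x) (hfy : H.lineGraph.Adj f y) : ¬ H.lineGraph.Adj f c := by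
  intro hfc
  have hpq := ne_of_coe_edgeSet_eq_mk hx
  have hpr := ne_of_coe_edgeSet_eq_mk hy
  have hqr := ne_of_coe_edgeSet_eq_mk hc
  have eq_of_mem {e : H.edgeSet} {u v : W} (he : (e : Sym2 W) = s(u, v)) (huv : u ≠ v)
      (hu : u ∈ (f : Sym2 W)) (hv : v ∈ (f : Sym2 W)) : f = e :=
    Subtype.ext (((Sym2.mem_and_mem_iff huv).mp ⟨hu, hv⟩).trans he.symm)
  obtain ⟨-, u, huf, hux⟩ := lineGraph_adj_iff_exists.mp hfx
  obtain ⟨-, v, hvf, hvy⟩ := lineGraph_adj_iff_exists.mp hfy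
  obtain ⟨-, w, hwf, hwc⟩ := lineGraph_adj_iff_exists.mp hfc
  rw [hx, Sym2.mem_iff] at hux
  rw [hy, Sym2.mem_iff] at hvy
  rw [hc, Sym2.mem_iff] at hwc
  rcases hux with rfl | rfl <;> rcases hvy with rfl | rfl <;> rcases hwc with rfl | rfl <;>
    first
    | exact hfx.ne (eq_of_mem hx hpq ‹_› ‹_›)
    | exact hfy.ne (eq_of_mem hy hpr ‹_› ‹_›)
    | exact hfc.ne (eq_of_mem hc hqr ‹_› ‹_›)

theorem lineGraph_adj_or_adj_or_adj {e a b c : H.edgeSet} (ha : H.lineGraph.Adj e a)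
    (hb : H.lineGraph.Adj e b) (hc : H.lineGraph.Adj e c) (hab : a ≠ b) (hbc : b ≠ c)
    (hac : a ≠ c) : H.lineGraph.Adj a b ∨ H.lineGraph.Adj b c ∨ H.lineGraph.Adj a c := by
  obtain ⟨-, p, hpe, -⟩ := lineGraph_adj_iff_exists.mp ha
  obtain ⟨q, he⟩ := Sym2.mem_iff_exists.mp hpe
  have endpoint {t : H.edgeSet} (ht : H.lineGraph.Adj e t) :
      p ∈ (t : Sym2 W) ∨ q ∈ (t : Sym2 W) := by
    obtain ⟨-, v, hve, hvt⟩ := lineGraph_adj_iff_exists.mp ht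
    rw [he, Sym2.mem_iff] at hve
    rcases hve with rfl | rfl <;> simp [hvt]
  rcases endpoint ha with ha' | ha' <;> rcases endpoint hb with hb' | hb' <;>
    rcases endpoint hc with hc' | hc' <;>
    first
    | exact Or.inl (lineGraph_adj_of_mem hab ha' hb')
    | exact Or.inr (Or.inl (lineGraph_adj_of_mem hbc hb' hc'))
    | exact Or.inr (Or.inr (lineGraph_adj_of_mem hac ha' hc'))

theorem lineGraph_forall_not_adj_of_diamond {x y a b : H.edgeSet}
    (hxy : H.lineGraph.Adj x y) (hax : H.lineGraph.Adj a x) (hay : H.lineGraph.Adj a y)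
    (hbx : H.lineGraph.Adj b x) (hby : H.lineGraph.Adj b y) (hab : a ≠ b)
    (hnab : ¬ H.lineGraph.Adj a b) :
    (∀ f, H.lineGraph.Adj f x → H.lineGraph.Adj f y → ¬ H.lineGraph.Adj f a) ∨
      (∀ f, H.lineGraph.Adj f x → H.lineGraph.Adj f y → ¬ H.lineGraph.Adj f b) := by
  obtain ⟨hxy, p, hpx, hpy⟩ := lineGraph_adj_iff_exists.mp hxy
  obtain ⟨q, hx⟩ := Sym2.mem_iff_exists.mp hpx
  obtain ⟨r, hy⟩ := Sym2.mem_iff_exists.mp hpy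
  have hqr : q ≠ r := by rintro rfl; exact hxy (Subtype.ext (hx.trans hy.symm))
  -- an edge meeting both `x = pq` and `y = pr` but avoiding `p` closes the triangle `pqr`
  have closes {c : H.edgeSet} (hcx : H.lineGraph.Adj c x) (hcy : H.lineGraph.Adj c y)
      (hpc : p ∉ (c : Sym2 W)) : (c : Sym2 W) = s(q, r) := by
    obtain ⟨-, u, huc, hux⟩ := lineGraph_adj_iff_exists.mp hcx
    obtain ⟨-, v, hvc, hvy⟩ := lineGraph_adj_iff_exists.mp hcy
    rw [hx, Sym2.mem_iff] at hux
    rw [hy, Sym2.mem_iff] at hvy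
    rcases hux with rfl | rfl
    · exact absurd huc hpc
    rcases hvy with rfl | rfl
    · exact absurd hvc hpc
    exact (Sym2.mem_and_mem_iff hqr).mp ⟨huc, hvc⟩
  by_cases hpa : p ∈ (a : Sym2 W)
  · have hpb : p ∉ (b : Sym2 W) := fun hpb => hnab (lineGraph_adj_of_mem hab hpa hpb)
    exact Or.inr fun f => lineGraph_not_adj_of_triangle hx hy (closes hbx hby hpb)
  · exact Or.inl fun f => lineGraph_not_adj_of_triangle hx hy (closes hax hay hpa)

end SimpleGraph

section LineGraph

variable {V : Type} {Γ : SimpleGraph V}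

theorem IsLineGraph.adj_or_adj_or_adj (hΓ : IsLineGraph Γ) {e a b c : V} (ha : Γ.Adj e a)
    (hb : Γ.Adj e b) (hc : Γ.Adj e c) (hab : a ≠ b) (hbc : b ≠ c) (hac : a ≠ c) :
    Γ.Adj a b ∨ Γ.Adj b c ∨ Γ.Adj a c := by
  obtain ⟨W, H, ⟨φ⟩⟩ := hΓ
  simp only [← φ.map_adj_iff] at ha hb hc ⊢
  exact SimpleGraph.lineGraph_adj_or_adj_or_adj ha hb hc (φ.injective.ne hab)
    (φ.injective.ne hbc) (φ.injective.ne hac)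

theorem IsLineGraph.forall_not_adj_of_diamond (hΓ : IsLineGraph Γ) {x y a b : V}
    (hxy : Γ.Adj x y) (hax : Γ.Adj a x) (hay : Γ.Adj a y) (hbx : Γ.Adj b x) (hby : Γ.Adj b y)
    (hab : a ≠ b) (hnab : ¬ Γ.Adj a b) :
    (∀ f, Γ.Adj f x → Γ.Adj f y → ¬ Γ.Adj f a) ∨
      (∀ f, Γ.Adj f x → Γ.Adj f y → ¬ Γ.Adj f b) := by
  obtain ⟨W, H, ⟨φ⟩⟩ := hΓ
  simp only [← φ.map_adj_iff] at hxy hax hay hbx hby hnab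
  refine (SimpleGraph.lineGraph_forall_not_adj_of_diamond hxy hax hay hbx hby
    (φ.injective.ne hab) hnab).imp ?_ ?_ <;>
  · intro h f hfx hfy
    rw [← φ.map_adj_iff] at hfx hfy ⊢
    exact h (φ f) hfx hfy

end LineGraph

theorem exists_forall_iff_eq_or_eq {ι : Type} {P : ι → Prop} (hP : ∃ i, P i)
    (hthree : ∀ i j k, P i → P j → P k → i = j ∨ j = k ∨ i = k) :
    ∃ i j, ∀ k, P k ↔ k = i ∨ k = j := by
  obtain ⟨i, hi⟩ := hP
  by_cases h : ∀ j, P j → j = i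
  · exact ⟨i, i, fun k => ⟨fun hk => Or.inl (h k hk), by rintro (rfl | rfl) <;> exact hi⟩⟩
  obtain ⟨j, hj, hji⟩ : ∃ j, P j ∧ j ≠ i := by simpa using h
  refine ⟨i, j, fun k => ⟨fun hk => ?_, by rintro (rfl | rfl) <;> assumption⟩⟩
  rcases hthree i j k hi hj hk with h | h | h
  exacts [absurd h.symm hji, Or.inr h.symm, Or.inl h.symm]

theorem isLineGraph_of_injective {V W : Type} (Γ : SimpleGraph V) (e : V → Sym2 W)
    (he : Function.Injective e) (hdiag : ∀ v, ¬ (e v).IsDiag)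
    (hadj : ∀ u v, Γ.Adj u v ↔ u ≠ v ∧ ∃ w, w ∈ e u ∧ w ∈ e v) :
    IsLineGraph Γ := by
  let H : SimpleGraph W := SimpleGraph.fromEdgeSet (Set.range e)
  have e_mem (v : V) : e v ∈ H.edgeSet := by
    rw [SimpleGraph.edgeSet_fromEdgeSet]
    exact ⟨⟨v, rfl⟩, hdiag v⟩
  let E : V → H.edgeSet := fun v => ⟨e v, e_mem v⟩
  have E_bijective : Function.Bijective E := by
    refine ⟨fun u v h => he (congrArg Subtype.val h), ?_⟩
    rintro ⟨f, hf⟩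
    rw [SimpleGraph.edgeSet_fromEdgeSet] at hf
    obtain ⟨⟨v, rfl⟩, -⟩ := hf
    exact ⟨v, rfl⟩
  refine ⟨W, H, ⟨Equiv.ofBijective E E_bijective, fun {u v} => ?_⟩⟩
  simp only [Equiv.ofBijective_apply, SimpleGraph.lineGraph_adj_iff_exists, hadj, ne_eq,
    E_bijective.injective.eq_iff]
  rfl

theorem isLineGraph_of_cliques {V ι : Type} (Γ : SimpleGraph V) (C : ι → Set V)
    (hadj : ∀ u v, Γ.Adj u v ↔ u ≠ v ∧ ∃ i, u ∈ C i ∧ v ∈ C i)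
    (hcover : ∀ v, ∃ i, v ∈ C i)
    (hthree : ∀ v i j k, v ∈ C i → v ∈ C j → v ∈ C k → i = j ∨ j = k ∨ i = k)
    (hshare : ∀ u v i j, u ≠ v → u ∈ C i → v ∈ C i → u ∈ C j → v ∈ C j → i = j) :
    IsLineGraph Γ := by
  classical
  choose i j hij using fun v => exists_forall_iff_eq_or_eq (hcover v) (hthree v)
  -- `v` becomes the edge between its two cliques, or a pendant edge at its only clique
  let e : V → Sym2 (ι ⊕ V) := fun v =>
    if i v = j v then s(.inl (i v), .inr v) else s(.inl (i v), .inl (j v))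
  have inl_mem {k : ι} {v : V} : .inl k ∈ e v ↔ v ∈ C k := by
    rw [hij]
    by_cases h : i v = j v <;> simp [e, h]
  have eq_of_inr_mem {u v : V} (h : .inr u ∈ e v) : u = v := by
    by_cases h' : i v = j v <;> simp_all [e]
  refine isLineGraph_of_injective Γ e (fun u v huv => ?_) (fun v => ?_) (fun u v => ?_)
  · by_contra hne
    by_cases h : i v = j v
    · exact hne (eq_of_inr_mem (by rw [huv]; simp [e, h] : .inr v ∈ e u)).symm
    · refine h (hshare u v (i v) (j v) hne ?_ ?_ ?_ ?_) <;>
        simp only [← inl_mem, huv] <;> simp [e, h]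
  · by_cases h : i v = j v <;> simp [e, h]
  · refine (hadj u v).trans (and_congr_right fun hne => ⟨?_, ?_⟩)
    · rintro ⟨k, hu, hv⟩
      exact ⟨.inl k, inl_mem.mpr hu, inl_mem.mpr hv⟩
    · rintro ⟨k | w, hu, hv⟩
      · exact ⟨k, inl_mem.mp hu, inl_mem.mp hv⟩
      · exact absurd ((eq_of_inr_mem hu).symm.trans (eq_of_inr_mem hv)) hne

section Group

variable {G : Type} [Group G]

theorem IsMaxCyclic.exists_zpowers_eq {M : Subgroup G} (hM : IsMaxCyclic M) :
    ∃ m : G, zpowers m = M :=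
  M.isCyclic_iff_exists_zpowers_eq_top.mp hM.1

theorem IsMaxCyclic.eq_of_zpowers_eq_of_mem {M N : Subgroup G} (hM : IsMaxCyclic M)
    (hN : IsCyclic N) {m : G} (hm : zpowers m = M) (hmN : m ∈ N) : N = M :=
  hM.2 N hN (hm ▸ zpowers_le.mpr hmN)

theorem IsMaxCyclic.notMem_of_zpowers_eq {M N : Subgroup G} (hM : IsMaxCyclic M)
    (hN : IsMaxCyclic N) (hMN : M ≠ N) {m : G} (hm : zpowers m = M) : m ∉ N :=
  fun hmN => hMN (hM.eq_of_zpowers_eq_of_mem hN.1 hm hmN).symm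

theorem ne_of_zpowers_eq {M N : Subgroup G} (hMN : M ≠ N) {m n : G} (hm : zpowers m = M)
    (hn : zpowers n = N) : m ≠ n := by
  rintro rfl
  exact hMN (hm.symm.trans hn)

theorem IsMaxCyclic.cyclicCore_le {M : Subgroup G} (hM : IsMaxCyclic M) : cyclicCore G ≤ M :=
  iInf₂_le M hM

theorem IsMaxCyclic.notMem_cyclicCore_of_zpowers_eq {M N : Subgroup G} (hM : IsMaxCyclic M)
    (hN : IsMaxCyclic N) (hMN : M ≠ N) {m : G} (hm : zpowers m = M) : m ∉ cyclicCore G :=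
  fun h => hM.notMem_of_zpowers_eq hN hMN hm (hN.cyclicCore_le h)

theorem IsMaxCyclic.adj_of_zpowers_eq {M N : Subgroup G} (hM : IsMaxCyclic M)
    (hN : IsMaxCyclic N) (hMN : M ≠ N) {m x : G} (hm : zpowers m = M) (hxM : x ∈ M)
    (hxN : x ∈ N) : (enhancedPowerGraph G).Adj x m :=
  ⟨fun h => hM.notMem_of_zpowers_eq hN hMN hm (h ▸ hxN), m, hm ▸ hxM, mem_zpowers m⟩

theorem eq_one_or_eq_of_mem_zpowers_of_inv_eq_s5 {m x : G} (hm : m⁻¹ = m) (hx : x ∈ zpowers m) :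
    x = 1 ∨ x = m := by
  obtain ⟨k, rfl⟩ := mem_zpowers_iff.mp hx
  have hm2 : m ^ (2 : ℤ) = 1 := by rw [zpow_two, ← mul_inv_cancel m, hm]
  rw [zpow_eq_zpow_emod k hm2]
  rcases Int.emod_two_eq_zero_or_one k with h | h <;> simp [h]

theorem IsMaxCyclic.exists_common_neighbor_of_mem_inf {M N : Subgroup G} (hM : IsMaxCyclic M)
    (hN : IsMaxCyclic N) (hMN : M ≠ N) {m x y : G} (hm : zpowers m = M) (hx : x ∈ M ⊓ N)
    (hy : y ∈ M ⊓ N) (hx1 : x ≠ 1) :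
    ∃ z ∉ N, (enhancedPowerGraph G).Adj z x ∧ (enhancedPowerGraph G).Adj z y ∧
      (enhancedPowerGraph G).Adj z m := by
  have hmN := hM.notMem_of_zpowers_eq hN hMN hm
  have hinvN : m⁻¹ ∉ N := fun h => hmN (inv_mem_iff.mp h)
  have hinv : m⁻¹ ≠ m := by
    intro h
    rcases eq_one_or_eq_of_mem_zpowers_of_inv_eq_s5 h (hm ▸ hx.1) with rfl | rfl
    exacts [hx1 rfl, hmN hx.2]
  have hgen (z : G) (hz : z ∈ M) : z ∈ zpowers m⁻¹ := by rwa [zpowers_inv, hm]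
  exact ⟨m⁻¹, hinvN, ⟨fun h => hinvN (h ▸ hx.2), m⁻¹, mem_zpowers _, hgen x hx.1⟩,
    ⟨fun h => hinvN (h ▸ hy.2), m⁻¹, mem_zpowers _, hgen y hy.1⟩,
    ⟨hinv, m⁻¹, mem_zpowers _, hgen m (hm ▸ mem_zpowers m)⟩⟩

variable [Finite G]

theorem exists_isMaxCyclic_mem (x : G) : ∃ M : Subgroup G, IsMaxCyclic M ∧ x ∈ M := by
  obtain ⟨M, hM, hmax⟩ :=
    (Set.toFinite {N : Subgroup G | IsCyclic N ∧ x ∈ N}).exists_maximalFor id _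
      ⟨zpowers x, inferInstance, mem_zpowers x⟩
  exact ⟨M, ⟨hM.1, fun N hN hMN => le_antisymm (hmax ⟨hN, hMN hM.2⟩ hMN) hMN⟩, hM.2⟩

theorem enhancedPowerGraph_adj_iff {a b : G} :
    (enhancedPowerGraph G).Adj a b ↔
      a ≠ b ∧ ∃ M : Subgroup G, IsMaxCyclic M ∧ a ∈ M ∧ b ∈ M := by
  refine and_congr_right fun _ => ⟨?_, ?_⟩
  · rintro ⟨z, ha, hb⟩
    obtain ⟨M, hM, hzM⟩ := exists_isMaxCyclic_mem z
    exact ⟨M, hM, zpowers_le.mpr hzM ha, zpowers_le.mpr hzM hb⟩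
  · rintro ⟨M, hM, ha, hb⟩
    obtain ⟨m, rfl⟩ := hM.exists_zpowers_eq
    exact ⟨m, ha, hb⟩

theorem isDominatingVertex_enhancedPowerGraph_iff {x : G} :
    IsDominatingVertex (enhancedPowerGraph G) x ↔ x ∈ cyclicCore G := by
  refine ⟨fun hx => mem_iInf.mpr fun M => mem_iInf.mpr fun hM => ?_, fun hx w hw => ?_⟩
  · obtain ⟨m, hm⟩ := hM.exists_zpowers_eq
    by_contra hxM
    have hmx : m ≠ x := by rintro rfl; exact hxM (hm ▸ mem_zpowers m)
    obtain ⟨-, N, hN, hxN, hmN⟩ := enhancedPowerGraph_adj_iff.mp (hx m hmx)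
    exact hxM (hM.eq_of_zpowers_eq_of_mem hN.1 hm hmN ▸ hxN)
  · obtain ⟨M, hM, hwM⟩ := exists_isMaxCyclic_mem w
    exact enhancedPowerGraph_adj_iff.mpr ⟨hw.symm, M, hM, hM.cyclicCore_le hx, hwM⟩

theorem not_isDominatingVertex_of_notMem_cyclicCore {x : G} (hx : x ∉ cyclicCore G) :
    ¬ IsDominatingVertex (enhancedPowerGraph G) x :=
  isDominatingVertex_enhancedPowerGraph_iff.not.mpr hx

theorem IsMaxCyclic.not_adj_of_zpowers_eq {M N : Subgroup G} (hM : IsMaxCyclic M)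
    (hN : IsMaxCyclic N) (hMN : M ≠ N) {m n : G} (hm : zpowers m = M) (hn : zpowers n = N) :
    ¬ (enhancedPowerGraph G).Adj m n := by
  rintro ⟨-, K, hmK, hnK⟩
  obtain ⟨L, hL, hkL⟩ := exists_isMaxCyclic_mem K
  have hKL : zpowers K ≤ L := zpowers_le.mpr hkL
  exact hMN ((hM.eq_of_zpowers_eq_of_mem hL.1 hm (hKL hmK)).symm.trans
    (hN.eq_of_zpowers_eq_of_mem hL.1 hn (hKL hnK)))

def properVertex (x : G) (hx : x ∉ cyclicCore G) :
    {v : G | ¬ IsDominatingVertex (enhancedPowerGraph G) v} :=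
  ⟨x, not_isDominatingVertex_of_notMem_cyclicCore hx⟩

theorem notMem_cyclicCore_of_properVertex
    (v : {v : G | ¬ IsDominatingVertex (enhancedPowerGraph G) v}) : (v : G) ∉ cyclicCore G :=
  fun h => v.2 (isDominatingVertex_enhancedPowerGraph_iff.mpr h)

theorem IsLineGraph.inf_inf_diff_cyclicCore_eq_empty
    (h : IsLineGraph (properEnhancedPowerGraph G))
    {Mi Mj Mk : Subgroup G} (hMi : IsMaxCyclic Mi) (hMj : IsMaxCyclic Mj) (hMk : IsMaxCyclic Mk)
    (hij : Mi ≠ Mj) (hjk : Mj ≠ Mk) (hik : Mi ≠ Mk) :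
    (↑(Mi ⊓ Mj ⊓ Mk) : Set G) \ ↑(cyclicCore G) = ∅ := by
  refine Set.eq_empty_iff_forall_notMem.mpr ?_
  rintro x ⟨⟨⟨hxi, hxj⟩, hxk⟩, hxT⟩
  obtain ⟨mi, hmi⟩ := hMi.exists_zpowers_eq
  obtain ⟨mj, hmj⟩ := hMj.exists_zpowers_eq
  obtain ⟨mk, hmk⟩ := hMk.exists_zpowers_eq
  rcases h.adj_or_adj_or_adj (e := properVertex x hxT)
      (a := properVertex mi (hMi.notMem_cyclicCore_of_zpowers_eq hMj hij hmi))
      (b := properVertex mj (hMj.notMem_cyclicCore_of_zpowers_eq hMk hjk hmj))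
      (c := properVertex mk (hMk.notMem_cyclicCore_of_zpowers_eq hMi hik.symm hmk))
      (hMi.adj_of_zpowers_eq hMj hij hmi hxi hxj)
      (hMj.adj_of_zpowers_eq hMk hjk hmj hxj hxk)
      (hMk.adj_of_zpowers_eq hMi hik.symm hmk hxk hxi)
      (Subtype.coe_ne_coe.mp (ne_of_zpowers_eq hij hmi hmj))
      (Subtype.coe_ne_coe.mp (ne_of_zpowers_eq hjk hmj hmk))
      (Subtype.coe_ne_coe.mp (ne_of_zpowers_eq hik hmi hmk)) with h | h | h
  exacts [hMi.not_adj_of_zpowers_eq hMj hij hmi hmj h,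
    hMj.not_adj_of_zpowers_eq hMk hjk hmj hmk h, hMi.not_adj_of_zpowers_eq hMk hik hmi hmk h]

theorem IsLineGraph.inf_diff_cyclicCore_subsingleton
    (h : IsLineGraph (properEnhancedPowerGraph G)) {Mi Mj : Subgroup G} (hMi : IsMaxCyclic Mi)
    (hMj : IsMaxCyclic Mj) (hij : Mi ≠ Mj) :
    ((↑(Mi ⊓ Mj) : Set G) \ ↑(cyclicCore G)).Subsingleton := by
  rintro x ⟨hx, hxT⟩ y ⟨hy, hyT⟩
  by_contra hxy
  obtain ⟨mi, hmi⟩ := hMi.exists_zpowers_eq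
  obtain ⟨mj, hmj⟩ := hMj.exists_zpowers_eq
  have hx1 : x ≠ 1 := fun h => hxT (h ▸ one_mem _)
  have no_common_neighbor {M N : Subgroup G} (hM : IsMaxCyclic M) (hN : IsMaxCyclic N)
      (hMN : M ≠ N) {m : G} (hm : zpowers m = M) (hxMN : x ∈ M ⊓ N) (hyMN : y ∈ M ⊓ N)
      (hmT : m ∉ cyclicCore G)
      (H : ∀ f, (properEnhancedPowerGraph G).Adj f (properVertex x hxT) →
        (properEnhancedPowerGraph G).Adj f (properVertex y hyT) →
        ¬ (properEnhancedPowerGraph G).Adj f (properVertex m hmT)) : False := by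
    obtain ⟨z, hzN, hzx, hzy, hzm⟩ :=
      hM.exists_common_neighbor_of_mem_inf hN hMN hm hxMN hyMN hx1
    exact H (properVertex z fun hzT => hzN (hN.cyclicCore_le hzT)) hzx hzy hzm
  rcases h.forall_not_adj_of_diamond (x := properVertex x hxT) (y := properVertex y hyT)
      (a := properVertex mi (hMi.notMem_cyclicCore_of_zpowers_eq hMj hij hmi))
      (b := properVertex mj (hMj.notMem_cyclicCore_of_zpowers_eq hMi hij.symm hmj))
      ⟨hxy, mi, hmi ▸ hx.1, hmi ▸ hy.1⟩
      (hMi.adj_of_zpowers_eq hMj hij hmi hx.1 hx.2).symm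
      (hMi.adj_of_zpowers_eq hMj hij hmi hy.1 hy.2).symm
      (hMj.adj_of_zpowers_eq hMi hij.symm hmj hx.2 hx.1).symm
      (hMj.adj_of_zpowers_eq hMi hij.symm hmj hy.2 hy.1).symm
      (Subtype.coe_ne_coe.mp (ne_of_zpowers_eq hij hmi hmj))
      (hMi.not_adj_of_zpowers_eq hMj hij hmi hmj) with H | H
  · exact no_common_neighbor hMi hMj hij hmi hx hy _ H
  · rw [inf_comm] at hx hy
    exact no_common_neighbor hMj hMi hij.symm hmj hx hy _ H

theorem isLineGraph_properEnhancedPowerGraph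
    (h1 : ∀ Mi Mj : Subgroup G, IsMaxCyclic Mi → IsMaxCyclic Mj → Mi ≠ Mj →
      ((↑(Mi ⊓ Mj) : Set G) \ ↑(cyclicCore G)).Subsingleton)
    (h2 : ∀ Mi Mj Mk : Subgroup G, IsMaxCyclic Mi → IsMaxCyclic Mj → IsMaxCyclic Mk →
      Mi ≠ Mj → Mj ≠ Mk → Mi ≠ Mk → (↑(Mi ⊓ Mj ⊓ Mk) : Set G) \ ↑(cyclicCore G) = ∅) :
    IsLineGraph (properEnhancedPowerGraph G) := by
  refine isLineGraph_of_cliques _ (fun M : {M : Subgroup G // IsMaxCyclic M} => {v | ↑v ∈ M.1})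
    (fun u v => ?_) (fun v => ?_) (fun v Mi Mj Mk hi hj hk => ?_)
    (fun u v Mi Mj huv hui hvi huj hvj => ?_)
  · change (enhancedPowerGraph G).Adj u v ↔ _
    simp only [enhancedPowerGraph_adj_iff, Subtype.coe_ne_coe, Subtype.exists,
      Set.mem_ofPred_eq, exists_prop]
  · obtain ⟨M, hM, hvM⟩ := exists_isMaxCyclic_mem (v : G)
    exact ⟨⟨M, hM⟩, hvM⟩
  · by_contra! hne
    exact (h2 Mi Mj Mk Mi.2 Mj.2 Mk.2 (Subtype.coe_ne_coe.mpr hne.1)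
      (Subtype.coe_ne_coe.mpr hne.2.1) (Subtype.coe_ne_coe.mpr hne.2.2)).subset
      ⟨⟨⟨hi, hj⟩, hk⟩, notMem_cyclicCore_of_properVertex v⟩
  · by_contra hne
    exact huv (Subtype.ext (h1 Mi Mj Mi.2 Mj.2 (Subtype.coe_ne_coe.mpr hne)
      ⟨⟨hui, huj⟩, notMem_cyclicCore_of_properVertex u⟩
      ⟨⟨hvi, hvj⟩, notMem_cyclicCore_of_properVertex v⟩))

end Group

theorem properEnhancedPowerGraph_isLineGraph_iff_general (G : Type) [Group G] [Fintype G] :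
    IsLineGraph (properEnhancedPowerGraph G) ↔
      ((∀ Mi Mj : Subgroup G, IsMaxCyclic Mi → IsMaxCyclic Mj → Mi ≠ Mj →
          Nat.card ↥((↑(Mi ⊓ Mj) : Set G) \ ↑(cyclicCore G)) ≤ 1) ∧
       (∀ Mi Mj Mk : Subgroup G, IsMaxCyclic Mi → IsMaxCyclic Mj → IsMaxCyclic Mk →
          Mi ≠ Mj → Mj ≠ Mk → Mi ≠ Mk →
          ((↑(Mi ⊓ Mj ⊓ Mk) : Set G) \ ↑(cyclicCore G)) = (∅ : Set G))) := by
  simp only [Nat.card_coe_set_eq, Set.ncard_le_one_iff_subsingleton]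
  exact ⟨fun h => ⟨fun _ _ => h.inf_diff_cyclicCore_subsingleton,
    fun _ _ _ => h.inf_inf_diff_cyclicCore_eq_empty⟩,
    fun h => isLineGraph_properEnhancedPowerGraph h.1 h.2⟩

/-- characterization of finite non-cyclic groups whose proper enhanced power
graph is a line graph, in terms of intersections of maximal cyclic subgroups modulo `T(G)`. -/
theorem properEnhancedPowerGraph_isLineGraph_iff (G : Type) [Group G] [Fintype G]
    (hnc : ¬ IsCyclic G) :
    IsLineGraph (properEnhancedPowerGraph G) ↔
      ((∀ Mi Mj : Subgroup G, IsMaxCyclic Mi → IsMaxCyclic Mj → Mi ≠ Mj →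
          Nat.card ↥((↑(Mi ⊓ Mj) : Set G) \ ↑(cyclicCore G)) ≤ 1) ∧
       (∀ Mi Mj Mk : Subgroup G, IsMaxCyclic Mi → IsMaxCyclic Mj → IsMaxCyclic Mk →
          Mi ≠ Mj → Mj ≠ Mk → Mi ≠ Mk →
          ((↑(Mi ⊓ Mj ⊓ Mk) : Set G) \ ↑(cyclicCore G)) = (∅ : Set G))) :=
  properEnhancedPowerGraph_isLineGraph_iff_general G
end

section
/- Let G be a finite non-cyclic group. Then neither the power graph P(G) nor the enhanced power graph P_E(G) is a line graph of any graph. -/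
/-!
The identity is adjacent to every other element in both graphs, while generators of two distinct
maximal cyclic subgroups are not even adjacent in the enhanced power graph. A finite non-cyclic
group has at least three maximal cyclic subgroups, since it is not the union of two proper
subgroups, so the identity together with three such generators spans an induced claw
`K_{1,3}`; line graphs contain no induced claw, because two of three edges meeting an edge `e`
must meet it at the same endpoint.
-/

open Subgroup

namespace SimpleGraph

lemma lineGraph_adj_of_three_adj {W : Type} {H : SimpleGraph W} {e a b c : H.edgeSet}
    (hab : a ≠ b) (hac : a ≠ c) (hbc : b ≠ c)
    (ha : H.lineGraph.Adj e a) (hb : H.lineGraph.Adj e b) (hc : H.lineGraph.Adj e c) :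
    H.lineGraph.Adj a b ∨ H.lineGraph.Adj a c ∨ H.lineGraph.Adj b c := by
  obtain ⟨⟨u, w⟩, he⟩ := Sym2.mk_surjective (e : Sym2 W)
  have meets_endpoint {x : H.edgeSet} (hx : H.lineGraph.Adj e x) :
      u ∈ (x : Sym2 W) ∨ w ∈ (x : Sym2 W) := by
    obtain ⟨-, v, hve, hvx⟩ := lineGraph_adj_iff_exists.1 hx
    rw [← he] at hve
    rcases Sym2.mem_iff.1 hve with rfl | rfl
    exacts [Or.inl hvx, Or.inr hvx]
  have adj_of_mem {x y : H.edgeSet} {v : W} (hxy : x ≠ y) (hx : v ∈ (x : Sym2 W))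
      (hy : v ∈ (y : Sym2 W)) : H.lineGraph.Adj x y :=
    lineGraph_adj_iff_exists.2 ⟨hxy, v, hx, hy⟩
  rcases meets_endpoint ha with h₁ | h₁ <;> rcases meets_endpoint hb with h₂ | h₂ <;>
    rcases meets_endpoint hc with h₃ | h₃ <;>
    first
    | exact Or.inl (adj_of_mem hab h₁ h₂)
    | exact Or.inr (Or.inl (adj_of_mem hac h₁ h₃))
    | exact Or.inr (Or.inr (adj_of_mem hbc h₂ h₃))

end SimpleGraph

lemma not_isLineGraph_of_induced_claw {V : Type} {Γ : SimpleGraph V} {v a b c : V}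
    (hab : a ≠ b) (hac : a ≠ c) (hbc : b ≠ c)
    (ha : Γ.Adj v a) (hb : Γ.Adj v b) (hc : Γ.Adj v c)
    (nab : ¬ Γ.Adj a b) (nac : ¬ Γ.Adj a c) (nbc : ¬ Γ.Adj b c) :
    ¬ IsLineGraph Γ := by
  rintro ⟨W, H, ⟨φ⟩⟩
  rcases SimpleGraph.lineGraph_adj_of_three_adj (φ.injective.ne hab) (φ.injective.ne hac)
      (φ.injective.ne hbc) (φ.map_adj_iff.2 ha) (φ.map_adj_iff.2 hb) (φ.map_adj_iff.2 hc)
    with h | h | h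
  exacts [nab (φ.map_adj_iff.1 h), nac (φ.map_adj_iff.1 h), nbc (φ.map_adj_iff.1 h)]

lemma Subgroup.exists_notMem_of_ne_top_of_ne_top {G : Type} [Group G] {A B : Subgroup G}
    (hA : A ≠ ⊤) (hB : B ≠ ⊤) : ∃ g : G, g ∉ A ∧ g ∉ B := by
  obtain ⟨a, haB⟩ := SetLike.exists_not_mem_of_ne_top B hB
  obtain ⟨b, hbA⟩ := SetLike.exists_not_mem_of_ne_top A hA
  by_contra! h
  have haA : a ∈ A := by_contra fun haA => haB (h a haA)
  have hbB : b ∈ B := h b hbA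
  by_cases hab : a * b ∈ A
  · exact hbA ((mul_mem_cancel_left haA).1 hab)
  · exact haB ((mul_mem_cancel_right hbB).1 (h _ hab))

section MaxCyclic

variable {G : Type} [Group G]

lemma isMaxCyclic_iff_maximal {M : Subgroup G} :
    IsMaxCyclic M ↔ Maximal (fun N : Subgroup G => IsCyclic N) M :=
  ⟨fun h => ⟨h.1, fun N hN hMN => (h.2 N hN hMN).le⟩,
    fun h => ⟨h.1, fun _ hN hMN => le_antisymm (h.2 hN hMN) hMN⟩⟩

lemma exists_isMaxCyclic_zpowers_mem [Finite G] (g : G) :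
    ∃ x : G, IsMaxCyclic (zpowers x) ∧ g ∈ zpowers x := by
  obtain ⟨M, hgM, hM⟩ := (Set.toFinite {N : Subgroup G | IsCyclic N}).exists_le_maximal
    (Subgroup.isCyclic_zpowers g)
  obtain ⟨x, rfl⟩ := (M.isCyclic_iff_exists_zpowers_eq_top).1 hM.1
  exact ⟨x, isMaxCyclic_iff_maximal.2 hM, zpowers_le.1 hgM⟩

lemma zpowers_ne_top_of_not_isCyclic (hnc : ¬ IsCyclic G) (x : G) : zpowers x ≠ ⊤ :=
  fun h => hnc (isCyclic_iff_exists_zpowers_eq_top.2 ⟨x, h⟩)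

lemma IsMaxCyclic.ne_bot_of_ne {M N : Subgroup G} (hM : IsMaxCyclic M) (hN : IsMaxCyclic N)
    (hMN : M ≠ N) : M ≠ ⊥ := by
  rintro rfl
  exact hMN (hM.2 N hN.1 bot_le).symm

lemma exists_three_isMaxCyclic_zpowers [Finite G] (hnc : ¬ IsCyclic G) :
    ∃ x₁ x₂ x₃ : G, IsMaxCyclic (zpowers x₁) ∧ IsMaxCyclic (zpowers x₂) ∧
      IsMaxCyclic (zpowers x₃) ∧ zpowers x₁ ≠ zpowers x₂ ∧ zpowers x₁ ≠ zpowers x₃ ∧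
      zpowers x₂ ≠ zpowers x₃ := by
  have hne_top := zpowers_ne_top_of_not_isCyclic hnc
  obtain ⟨x₁, h₁, -⟩ := exists_isMaxCyclic_zpowers_mem (1 : G)
  obtain ⟨g, hg⟩ := SetLike.exists_not_mem_of_ne_top _ (hne_top x₁)
  obtain ⟨x₂, h₂, hgx₂⟩ := exists_isMaxCyclic_zpowers_mem g
  obtain ⟨g', hg'₁, hg'₂⟩ :=
    Subgroup.exists_notMem_of_ne_top_of_ne_top (hne_top x₁) (hne_top x₂)
  obtain ⟨x₃, h₃, hg'x₃⟩ := exists_isMaxCyclic_zpowers_mem g'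
  exact ⟨x₁, x₂, x₃, h₁, h₂, h₃, fun h => hg (h ▸ hgx₂), fun h => hg'₁ (h ▸ hg'x₃),
    fun h => hg'₂ (h ▸ hg'x₃)⟩

end MaxCyclic

section PowerGraphs

variable {G : Type} [Group G]

lemma powerGraph_le_enhancedPowerGraph : powerGraph G ≤ enhancedPowerGraph G := by
  rintro x y ⟨hxy, hx | hy⟩
  exacts [⟨hxy, y, hx, mem_zpowers y⟩, ⟨hxy, x, mem_zpowers x, hy⟩]

lemma powerGraph_adj_one {x : G} (hx : x ≠ 1) : (powerGraph G).Adj 1 x :=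
  ⟨hx.symm, Or.inl (one_mem _)⟩

lemma enhancedPowerGraph_not_adj_of_isMaxCyclic {x y : G} (hx : IsMaxCyclic (zpowers x))
    (hy : IsMaxCyclic (zpowers y)) (hxy : zpowers x ≠ zpowers y) :
    ¬ (enhancedPowerGraph G).Adj x y := by
  rintro ⟨-, z, hxz, hyz⟩
  exact hxy ((hx.2 _ inferInstance (zpowers_le.2 hxz)).symm.trans
    (hy.2 _ inferInstance (zpowers_le.2 hyz)))

end PowerGraphs

/-- for a finite non-cyclic group, neither the power graph nor the enhanced
power graph is a line graph. -/
theorem not_isLineGraph_of_not_isCyclic (G : Type) [Group G] [Fintype G]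
    (hnc : ¬ IsCyclic G) :
    ¬ IsLineGraph (powerGraph G) ∧ ¬ IsLineGraph (enhancedPowerGraph G) := by
  obtain ⟨x₁, x₂, x₃, h₁, h₂, h₃, h₁₂, h₁₃, h₂₃⟩ := exists_three_isMaxCyclic_zpowers hnc
  have ne_one {x y : G} (hx : IsMaxCyclic (zpowers x)) (hy : IsMaxCyclic (zpowers y))
      (hxy : zpowers x ≠ zpowers y) : x ≠ 1 :=
    mt zpowers_eq_bot.2 (hx.ne_bot_of_ne hy hxy)
  have adj₁ := powerGraph_adj_one (ne_one h₁ h₂ h₁₂)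
  have adj₂ := powerGraph_adj_one (ne_one h₂ h₁ h₁₂.symm)
  have adj₃ := powerGraph_adj_one (ne_one h₃ h₁ h₁₃.symm)
  have nadj₁₂ := enhancedPowerGraph_not_adj_of_isMaxCyclic h₁ h₂ h₁₂
  have nadj₁₃ := enhancedPowerGraph_not_adj_of_isMaxCyclic h₁ h₃ h₁₃
  have nadj₂₃ := enhancedPowerGraph_not_adj_of_isMaxCyclic h₂ h₃ h₂₃
  have hx₁₂ := ne_of_apply_ne zpowers h₁₂
  have hx₁₃ := ne_of_apply_ne zpowers h₁₃
  have hx₂₃ := ne_of_apply_ne zpowers h₂₃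
  have hle : powerGraph G ≤ enhancedPowerGraph G := powerGraph_le_enhancedPowerGraph
  exact ⟨not_isLineGraph_of_induced_claw hx₁₂ hx₁₃ hx₂₃ adj₁ adj₂ adj₃
      (mt (hle ·) nadj₁₂) (mt (hle ·) nadj₁₃) (mt (hle ·) nadj₂₃),
    not_isLineGraph_of_induced_claw hx₁₂ hx₁₃ hx₂₃ (hle adj₁) (hle adj₂) (hle adj₃)
      nadj₁₂ nadj₁₃ nadj₂₃⟩
end
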